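/- arXiv:2406.14292 — 3 statements merged into one kernel-verified Lean document; each statement's English description precedes it below -/
import Mathlib

section
/- Let g be convex and suppose prox_g^λ(y₀) = y₁. Then for every a ∈ ℝ^d, ‖y₁ − a‖² ≤ ‖y₀ − a‖² − 2λ(g(y₀) − g(a)) + λ²‖∇⁰g(y₀)‖², where ∇⁰g(y₀) is the least-norm element of the subdifferential ∂g(y₀). -/
/-!
Minimality of `y₁` for `z ↦ g z + ‖z - y₀‖² / (2λ)`, tested along the segment from `y₁` to `a`
and combined with convexity, makes `(y₀ - y₁) / λ` a subgradient of `g` at `y₁`. The three-point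
identity for `y₀, y₁, a` then gives `‖y₁ - a‖² ≤ ‖y₀ - a‖² - ‖y₁ - y₀‖² + 2λ (g a - g y₁)`.
Bounding `g y₁` from below by the subgradient `s` at `y₀` leaves
`-‖y₁ - y₀‖² - 2λ ⟪s, y₁ - y₀⟫`, which is at most `λ² ‖s‖²` by completing the square.
-/

open Set Filter Topology
open scoped InnerProductSpace

theorem nonneg_of_forall_mem_Ioo_nonneg_add_mul {c m : ℝ}
    (h : ∀ t ∈ Ioo (0 : ℝ) 1, 0 ≤ c + t * m) : 0 ≤ c := by
  have hlim : Tendsto (fun t : ℝ => c + t * m) (𝓝[>] 0) (𝓝 c) := by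
    have : Continuous fun t : ℝ => c + t * m := by fun_prop
    simpa using (this.tendsto 0).mono_left nhdsWithin_le_nhds
  exact ge_of_tendsto hlim (eventually_of_mem (Ioo_mem_nhdsGT one_pos) h)

section Prox

variable {E : Type*} [NormedAddCommGroup E] [InnerProductSpace ℝ E]
  {g : E → ℝ} {lam : ℝ} {y₀ y₁ : E}

theorem norm_sub_sq_eq_three_point (x y a : E) :
    ‖y - a‖ ^ 2 = ‖x - a‖ ^ 2 - ‖y - x‖ ^ 2 + 2 * ⟪x - y, a - y⟫_ℝ := by
  have hsplit : x - a = (x - y) - (a - y) := by abel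
  rw [hsplit, norm_sub_sq_real (x - y), ← norm_neg (y - x), neg_sub, ← norm_neg (y - a), neg_sub]
  ring

theorem ConvexOn.inner_le_of_isMinOn_prox (hg : ConvexOn ℝ univ g) (hlam : 0 < lam)
    (hprox : IsMinOn (fun z => g z + ‖z - y₀‖ ^ 2 / (2 * lam)) univ y₁) (a : E) :
    ⟪y₀ - y₁, a - y₁⟫_ℝ ≤ lam * (g a - g y₁) := by
  suffices 0 ≤ 2 * lam * (g a - g y₁) - 2 * ⟪y₀ - y₁, a - y₁⟫_ℝ by linarith
  refine nonneg_of_forall_mem_Ioo_nonneg_add_mul (m := ‖a - y₁‖ ^ 2) fun t ⟨ht0, ht1⟩ => ?_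
  have hmin := isMinOn_univ_iff.1 hprox (y₁ + t • (a - y₁))
  have hsegment : y₁ + t • (a - y₁) = (1 - t) • y₁ + t • a := by
    rw [smul_sub, sub_smul, one_smul]; abel
  have hconv : g ((1 - t) • y₁ + t • a) ≤ (1 - t) * g y₁ + t * g a :=
    hg.2 (mem_univ _) (mem_univ _) (by linarith) ht0.le (by ring)
  have hnorm : ‖y₁ + t • (a - y₁) - y₀‖ ^ 2
      = ‖y₁ - y₀‖ ^ 2 - 2 * t * ⟪y₀ - y₁, a - y₁⟫_ℝ + t ^ 2 * ‖a - y₁‖ ^ 2 := by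
    rw [add_sub_right_comm, norm_add_sq_real, real_inner_smul_right, norm_smul,
      Real.norm_of_nonneg ht0.le, ← neg_sub y₀ y₁, inner_neg_left, norm_neg]
    ring
  rw [hnorm, hsegment] at hmin
  have hscaled : 0 ≤ t * (2 * lam * (g a - g y₁) - 2 * ⟪y₀ - y₁, a - y₁⟫_ℝ
      + t * ‖a - y₁‖ ^ 2) := by
    have h2lam : 0 < 2 * lam := by positivity
    field_simp at hmin
    nlinarith
  exact (mul_nonneg_iff_of_pos_left ht0).1 hscaled

theorem ConvexOn.norm_sub_sq_le_of_isMinOn_prox (hg : ConvexOn ℝ univ g) (hlam : 0 < lam)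
    (hprox : IsMinOn (fun z => g z + ‖z - y₀‖ ^ 2 / (2 * lam)) univ y₁) {s : E}
    (hs : ∀ y, g y₀ + ⟪s, y - y₀⟫_ℝ ≤ g y) (a : E) :
    ‖y₁ - a‖ ^ 2 ≤ ‖y₀ - a‖ ^ 2 - 2 * lam * (g y₀ - g a) + lam ^ 2 * ‖s‖ ^ 2 := by
  have hopt := hg.inner_le_of_isMinOn_prox hlam hprox a
  have hsub := hs y₁
  have hsquare : -(2 * lam * ⟪s, y₁ - y₀⟫_ℝ) ≤ ‖y₁ - y₀‖ ^ 2 + lam ^ 2 * ‖s‖ ^ 2 := by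
    have := neg_le_abs (⟪s, y₁ - y₀⟫_ℝ)
    nlinarith [abs_real_inner_le_norm s (y₁ - y₀), two_mul_le_add_sq (lam * ‖s‖) ‖y₁ - y₀‖]
  rw [norm_sub_sq_eq_three_point y₀]
  nlinarith

end Prox

theorem stmt_9_general (d : ℕ) (g : EuclideanSpace ℝ (Fin d) → ℝ) (lam : ℝ) (hlam : 0 < lam)
    (hconv : ConvexOn ℝ Set.univ g)
    (y₀ y₁ : EuclideanSpace ℝ (Fin d))
    (hprox : ∀ z : EuclideanSpace ℝ (Fin d),
      g y₁ + ‖y₁ - y₀‖ ^ 2 / (2 * lam) ≤ g z + ‖z - y₀‖ ^ 2 / (2 * lam))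
    (s : EuclideanSpace ℝ (Fin d))
    (hs : ∀ y : EuclideanSpace ℝ (Fin d), g y₀ + (inner ℝ s (y - y₀) : ℝ) ≤ g y) :
    ∀ a : EuclideanSpace ℝ (Fin d),
      ‖y₁ - a‖ ^ 2 ≤ ‖y₀ - a‖ ^ 2 - 2 * lam * (g y₀ - g a) + lam ^ 2 * ‖s‖ ^ 2 :=
  hconv.norm_sub_sq_le_of_isMinOn_prox hlam (isMinOn_univ_iff.2 hprox) hs

/-- One-step proximal inequality: if y₁ = prox_g^λ(y₀) and s is the least-norm
subgradient of g at y₀, then for every a,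
‖y₁ − a‖² ≤ ‖y₀ − a‖² − 2λ(g(y₀) − g(a)) + λ²‖s‖². -/
theorem stmt_9 (d : ℕ) (g : EuclideanSpace ℝ (Fin d) → ℝ) (lam : ℝ) (hlam : 0 < lam)
    (hconv : ConvexOn ℝ Set.univ g) (hlsc : LowerSemicontinuous g)
    (y₀ y₁ : EuclideanSpace ℝ (Fin d))
    (hprox : ∀ z : EuclideanSpace ℝ (Fin d),
      g y₁ + ‖y₁ - y₀‖ ^ 2 / (2 * lam) ≤ g z + ‖z - y₀‖ ^ 2 / (2 * lam))
    (s : EuclideanSpace ℝ (Fin d))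
    (hs : ∀ y : EuclideanSpace ℝ (Fin d), g y₀ + (inner ℝ s (y - y₀) : ℝ) ≤ g y)
    (hsmin : ∀ t : EuclideanSpace ℝ (Fin d),
      (∀ y : EuclideanSpace ℝ (Fin d), g y₀ + (inner ℝ t (y - y₀) : ℝ) ≤ g y) →
        ‖s‖ ≤ ‖t‖) :
    ∀ a : EuclideanSpace ℝ (Fin d),
      ‖y₁ - a‖ ^ 2 ≤ ‖y₀ - a‖ ^ 2 - 2 * lam * (g y₀ - g a) + lam ^ 2 * ‖s‖ ^ 2 :=
  stmt_9_general d g lam hlam hconv y₀ y₁ hprox s hs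
end

section
/- If a convex C¹ function f: ℝ^d → ℝ has L-Lipschitz gradient, then ∇f is co-coercive: ⟨∇f(x) − ∇f(y), x − y⟩ ≥ (1/L)‖∇f(x) − ∇f(y)‖² for all x, y. -/
/-! A Lipschitz gradient gives the descent lemma
`f y ≤ f x + ⟪∇f x, y - x⟫ + L/2 ‖y - x‖²`. Apply it to the convex function
`g = f - ⟪∇f y, ·⟫`, which is minimised at `y`, at the gradient step `x - ∇g x / L`: this yields
`‖∇f x - ∇f y‖² / (2L) ≤ f x - f y - ⟪∇f y, x - y⟫`. Adding this inequality to the one with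
`x` and `y` exchanged gives co-coercivity. -/

open Set AffineMap RealInnerProductSpace

variable {E : Type*} [NormedAddCommGroup E] [InnerProductSpace ℝ E]
  {f : E → ℝ} {φ : E → E} {L : ℝ}

theorem ConvexOn.sub_inner {s : Set E} (hf : ConvexOn ℝ s f) (a : E) :
    ConvexOn ℝ s (fun w => f w - ⟪a, w⟫) :=
  hf.sub ((innerₛₗ ℝ a).concaveOn hf.1)

theorem inner_sub_apply_lineMap_le (hlip : ∀ p q, ‖φ p - φ q‖ ≤ L * ‖p - q‖)
    (x y : E) {t : ℝ} (ht : 0 ≤ t) :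
    ⟪φ (lineMap x y t) - φ x, y - x⟫ ≤ L * t * ‖y - x‖ ^ 2 :=
  calc ⟪φ (lineMap x y t) - φ x, y - x⟫
      ≤ ‖φ (lineMap x y t) - φ x‖ * ‖y - x‖ := real_inner_le_norm _ _
    _ ≤ L * ‖lineMap x y t - x‖ * ‖y - x‖ := by gcongr; exact hlip _ _
    _ = L * t * ‖y - x‖ ^ 2 := by
      rw [← vsub_eq_sub _ x, lineMap_vsub_left, vsub_eq_sub, norm_smul, Real.norm_of_nonneg ht]
      ring

variable [CompleteSpace E]

theorem HasGradientAt.hasDerivAt_comp_lineMap {g x y : E} {t : ℝ}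
    (hf : HasGradientAt f g (lineMap x y t)) :
    HasDerivAt (fun s : ℝ => f (lineMap x y s)) ⟪g, y - x⟫ t :=
  (hasGradientAt_iff_hasFDerivAt.mp hf).comp_hasDerivAt t hasDerivAt_lineMap

theorem HasGradientAt.sub_inner {g a x : E} (hf : HasGradientAt f g x) :
    HasGradientAt (fun w => f w - ⟪a, w⟫) (g - a) x := by
  rw [hasGradientAt_iff_hasFDerivAt, map_sub]
  exact (hasGradientAt_iff_hasFDerivAt.mp hf).sub (InnerProductSpace.toDual ℝ E a).hasFDerivAt

theorem ConvexOn.inner_le_sub_of_hasGradientAt (hf : ConvexOn ℝ univ f) {g x : E}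
    (hg : HasGradientAt f g x) (y : E) : ⟪g, y - x⟫ ≤ f y - f x := by
  have hline : ConvexOn ℝ univ (fun s : ℝ => f (lineMap x y s)) :=
    hf.comp_affineMap (lineMap x y)
  have hd := HasGradientAt.hasDerivAt_comp_lineMap (y := y) (t := 0) (by simpa using hg)
  have hslope := hline.le_slope_of_hasDerivAt (mem_univ 0) (mem_univ 1) one_pos hd
  simpa only [slope_def_field, lineMap_apply_one, lineMap_apply_zero, sub_zero, div_one]
    using hslope

theorem le_add_inner_add_sq_of_lipschitz_gradient (hgrad : ∀ p, HasGradientAt f (φ p) p)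
    (hlip : ∀ p q, ‖φ p - φ q‖ ≤ L * ‖p - q‖) (x y : E) :
    f y ≤ f x + ⟪φ x, y - x⟫ + L / 2 * ‖y - x‖ ^ 2 := by
  set v := y - x
  let h : ℝ → ℝ := fun t => f (lineMap x y t) - t * ⟪φ x, v⟫ - L / 2 * t ^ 2 * ‖v‖ ^ 2
  have hderiv : ∀ t, HasDerivAt h (⟪φ (lineMap x y t) - φ x, v⟫ - L * t * ‖v‖ ^ 2) t := by
    intro t
    refine ((((hgrad _).hasDerivAt_comp_lineMap).sub ((hasDerivAt_id t).mul_const _)).sub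
      (((hasDerivAt_pow 2 t).const_mul (L / 2)).mul_const (‖v‖ ^ 2))).congr_deriv ?_
    rw [inner_sub_left]; simp only [one_mul, Nat.cast_ofNat, Nat.add_one_sub_one, pow_one]; ring
  have hanti : AntitoneOn h (Ici 0) :=
    antitoneOn_of_hasDerivWithinAt_nonpos (convex_Ici 0)
      (fun t _ => (hderiv t).continuousAt.continuousWithinAt)
      (fun t _ => (hderiv t).hasDerivWithinAt)
      (fun t ht => by
        rw [interior_Ici] at ht
        linarith [inner_sub_apply_lineMap_le hlip x y (le_of_lt ht)])
  have hmono : h 1 ≤ h 0 := hanti self_mem_Ici (mem_Ici.mpr zero_le_one) zero_le_one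
  simp only [h, lineMap_apply_one, lineMap_apply_zero] at hmono
  linarith

theorem sq_norm_div_le_sub_of_forall_le (hL : 0 < L) (hgrad : ∀ p, HasGradientAt f (φ p) p)
    (hlip : ∀ p q, ‖φ p - φ q‖ ≤ L * ‖p - q‖) (x : E) {y : E} (hmin : ∀ z, f y ≤ f z) :
    ‖φ x‖ ^ 2 / (2 * L) ≤ f x - f y := by
  have hdescent := le_add_inner_add_sq_of_lipschitz_gradient hgrad hlip x (x - L⁻¹ • φ x)
  have hstep := hmin (x - L⁻¹ • φ x)
  simp only [sub_sub_cancel_left, inner_neg_right, real_inner_smul_right,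
    real_inner_self_eq_norm_sq, norm_neg, norm_smul, norm_inv, Real.norm_of_nonneg hL.le]
    at hdescent
  have hquad : L / 2 * (L⁻¹ * ‖φ x‖) ^ 2 = ‖φ x‖ ^ 2 / (2 * L) := by field_simp
  linear_combination hstep + hdescent + hquad

theorem sq_norm_sub_div_le_of_lipschitz_gradient (hL : 0 < L) (hconv : ConvexOn ℝ univ f)
    (hgrad : ∀ p, HasGradientAt f (φ p) p) (hlip : ∀ p q, ‖φ p - φ q‖ ≤ L * ‖p - q‖) (x y : E) :
    ‖φ x - φ y‖ ^ 2 / (2 * L) ≤ f x - f y - ⟪φ y, x - y⟫ := by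
  set g := fun w => f w - ⟪φ y, w⟫
  have hgrad' : ∀ p, HasGradientAt g (φ p - φ y) p := fun p => (hgrad p).sub_inner
  have hlip' : ∀ p q, ‖(φ p - φ y) - (φ q - φ y)‖ ≤ L * ‖p - q‖ := by simpa only [sub_sub_sub_cancel_right] using hlip
  have hmin : ∀ z, g y ≤ g z := fun z => by
    have := (hconv.sub_inner (φ y)).inner_le_sub_of_hasGradientAt (hgrad' y) z
    rwa [sub_self, inner_zero_left, sub_nonneg] at this
  have := sq_norm_div_le_sub_of_forall_le hL hgrad' hlip' x hmin
  simp only [g, inner_sub_right] at this ⊢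
  linarith

/-- Baillon–Haddad: a convex C¹ function with L-Lipschitz gradient has a
co-coercive gradient. -/
theorem stmt_11 (d : ℕ) (f : EuclideanSpace ℝ (Fin d) → ℝ) (L : ℝ) (hL : 0 < L)
    (hconv : ConvexOn ℝ Set.univ f)
    (f' : EuclideanSpace ℝ (Fin d) → EuclideanSpace ℝ (Fin d))
    (hgrad : ∀ x, HasGradientAt f (f' x) x)
    (hlip : ∀ x y : EuclideanSpace ℝ (Fin d), ‖f' x - f' y‖ ≤ L * ‖x - y‖) :
    ∀ x y : EuclideanSpace ℝ (Fin d),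
      (1 / L) * ‖f' x - f' y‖ ^ 2 ≤ (inner ℝ (f' x - f' y) (x - y) : ℝ) := by
  intro x y
  have hxy := sq_norm_sub_div_le_of_lipschitz_gradient hL hconv hgrad hlip x y
  have hyx := sq_norm_sub_div_le_of_lipschitz_gradient hL hconv hgrad hlip y x
  rw [norm_sub_rev] at hyx
  simp only [inner_sub_left, inner_sub_right] at hxy hyx ⊢
  linear_combination hxy + hyx
end

section
/- Let f be μ-strongly convex and differentiable with L-Lipschitz gradient, and let Z = X − γ∇f(X) for a step size γ ≤ 1/L. Then for every a: ‖Z − a‖² ≤ (1 − γμ)‖X − a‖² + 2γ(f(a) − f(Z)). -/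
/-!
Strong convexity bounds `f a` from below by the tangent plane at `X` plus `μ/2 ‖X - a‖²`, and the
Lipschitz gradient bounds `f` from above by the tangent plane plus `L/2 ‖· - X‖²`, which for
`γ L ≤ 1` gives the sufficient decrease `f Z ≤ f X - γ/2 ‖∇f X‖²`. Adding `2γ` times these two
inequalities to `‖Z - a‖² = ‖X - a‖² - 2γ ⟪∇f X, X - a⟫ + γ² ‖∇f X‖²` gives the claim.
-/

open Set InnerProductSpace

variable {E : Type*} [NormedAddCommGroup E] [InnerProductSpace ℝ E] [CompleteSpace E]

lemma HasGradientAt.comp_hasDerivAt {f : E → ℝ} {g : E} {c : ℝ → E} {c' : E} {t : ℝ}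
    (hf : HasGradientAt f g (c t)) (hc : HasDerivAt c c' t) :
    HasDerivAt (fun s ↦ f (c s)) ⟪g, c'⟫_ℝ t := by
  have h := hf.hasFDerivAt.comp_hasDerivAt t hc
  rw [toDual_apply_apply] at h
  exact h

lemma StrongConvexOn.add_inner_add_le {f : E → ℝ} {μ : ℝ} {g x : E}
    (hf : StrongConvexOn univ μ f) (hg : HasGradientAt f g x) (y : E) :
    f x + ⟪g, y - x⟫_ℝ + μ / 2 * ‖y - x‖ ^ 2 ≤ f y := by
  -- `f - μ/2 ‖·‖²` is convex, so on the segment its derivative at `x` is below the secant slope.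
  set φ : ℝ → ℝ := fun t ↦ f (AffineMap.lineMap x y t) - μ / 2 * ‖AffineMap.lineMap x y t‖ ^ 2
  have hφ : ConvexOn ℝ univ φ :=
    (strongConvexOn_iff_convex.mp hf).comp_affineMap (AffineMap.lineMap x y)
  have hline : HasDerivAt (AffineMap.lineMap x y) (y - x) (0 : ℝ) := AffineMap.hasDerivAt_lineMap
  have hφ' : HasDerivAt φ (⟪g, y - x⟫_ℝ - μ / 2 * (2 * ⟪x, y - x⟫_ℝ)) 0 := by
    have := (HasGradientAt.comp_hasDerivAt (by simpa using hg) hline).sub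
      ((hline.norm_sq).const_mul (μ / 2))
    rwa [AffineMap.lineMap_apply_zero] at this
  have hslope := hφ.le_slope_of_hasDerivAt (mem_univ 0) (mem_univ 1) zero_lt_one hφ'
  simp only [slope_def_field, φ, AffineMap.lineMap_apply_zero,
    AffineMap.lineMap_apply_one] at hslope
  have hy : ‖y‖ ^ 2 = ‖x‖ ^ 2 + 2 * ⟪x, y - x⟫_ℝ + ‖y - x‖ ^ 2 := by
    rw [← norm_add_sq_real, add_sub_cancel]
  rw [hy, sub_zero, div_one] at hslope
  linarith

lemma le_add_deriv_add_of_deriv_sub_le_mul {φ φ' : ℝ → ℝ} {K : ℝ}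
    (hφ : ∀ t, HasDerivAt φ (φ' t) t) (hK : ∀ t ∈ Ico (0 : ℝ) 1, φ' t - φ' 0 ≤ K * t) :
    φ 1 ≤ φ 0 + φ' 0 + K / 2 := by
  have hB : ∀ t, HasDerivAt (fun t ↦ φ 0 + t * φ' 0 + K / 2 * t ^ 2) (φ' 0 + K * t) t :=
    fun t ↦ ((((hasDerivAt_id t).mul_const (φ' 0)).const_add (φ 0)).add
      ((hasDerivAt_pow 2 t).const_mul (K / 2))).congr_deriv (by simp; ring)
  have := image_le_of_deriv_right_le_deriv_boundary (a := 0) (b := 1)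
    (fun t _ ↦ (hφ t).continuousAt.continuousWithinAt) (fun t _ ↦ (hφ t).hasDerivWithinAt)
    (by simp) (fun t _ ↦ (hB t).continuousAt.continuousWithinAt)
    (fun t _ ↦ (hB t).hasDerivWithinAt) (fun t ht ↦ by linarith [hK t ht])
    (right_mem_Icc.mpr zero_le_one)
  simpa using this

lemma le_add_inner_add_of_lipschitz_gradient {f : E → ℝ} {f' : E → E} {L : ℝ}
    (hf : ∀ x, HasGradientAt f (f' x) x) (hlip : ∀ x y, ‖f' x - f' y‖ ≤ L * ‖x - y‖) (x y : E) :
    f y ≤ f x + ⟪f' x, y - x⟫_ℝ + L / 2 * ‖y - x‖ ^ 2 := by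
  have hline : ∀ t : ℝ, HasDerivAt (AffineMap.lineMap x y) (y - x) t :=
    fun t ↦ AffineMap.hasDerivAt_lineMap
  have := le_add_deriv_add_of_deriv_sub_le_mul (K := L * ‖y - x‖ ^ 2)
    (fun t ↦ (hf _).comp_hasDerivAt (hline t)) fun t ht ↦ by
      calc ⟪f' (AffineMap.lineMap x y t), y - x⟫_ℝ - ⟪f' (AffineMap.lineMap x y (0 : ℝ)), y - x⟫_ℝ
          = ⟪f' (AffineMap.lineMap x y t) - f' x, y - x⟫_ℝ := by simp [inner_sub_left]
        _ ≤ ‖f' (AffineMap.lineMap x y t) - f' x‖ * ‖y - x‖ := real_inner_le_norm _ _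
        _ ≤ L * ‖AffineMap.lineMap x y t - x‖ * ‖y - x‖ := by gcongr; exact hlip _ _
        _ = L * ‖y - x‖ ^ 2 * t := by
          rw [AffineMap.lineMap_apply_module', add_sub_cancel_right, norm_smul,
            Real.norm_of_nonneg ht.1]
          ring
  simpa [mul_div_right_comm] using this

lemma apply_sub_smul_gradient_le {f : E → ℝ} {f' : E → E} {L γ : ℝ}
    (hf : ∀ x, HasGradientAt f (f' x) x) (hlip : ∀ x y, ‖f' x - f' y‖ ≤ L * ‖x - y‖)
    (hγ : 0 ≤ γ) (hLγ : L * γ ≤ 1) (x : E) :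
    f (x - γ • f' x) ≤ f x - γ / 2 * ‖f' x‖ ^ 2 := by
  have h := le_add_inner_add_of_lipschitz_gradient hf hlip x (x - γ • f' x)
  rw [sub_sub_cancel_left, inner_neg_right, real_inner_smul_right, real_inner_self_eq_norm_sq,
    norm_neg, norm_smul, Real.norm_of_nonneg hγ] at h
  nlinarith [mul_nonneg (mul_nonneg (sub_nonneg.mpr hLγ) hγ) (sq_nonneg ‖f' x‖)]

theorem stmt_12_general (d : ℕ) (f : EuclideanSpace ℝ (Fin d) → ℝ) (μ L γ : ℝ)
    (hsc : StrongConvexOn Set.univ μ f)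
    (f' : EuclideanSpace ℝ (Fin d) → EuclideanSpace ℝ (Fin d))
    (hgrad : ∀ x, HasGradientAt f (f' x) x)
    (hlip : ∀ x y : EuclideanSpace ℝ (Fin d), ‖f' x - f' y‖ ≤ L * ‖x - y‖)
    (hγ0 : 0 < γ) (hγ : γ ≤ 1 / L)
    (X a : EuclideanSpace ℝ (Fin d)) :
    ‖(X - γ • f' X) - a‖ ^ 2 ≤
      (1 - γ * μ) * ‖X - a‖ ^ 2 + 2 * γ * (f a - f (X - γ • f' X)) := by
  have hLγ : L * γ ≤ 1 := by
    rwa [le_div_iff₀' (one_div_pos.mp (hγ0.trans_le hγ))] at hγ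
  have hdecrease := apply_sub_smul_gradient_le hgrad hlip hγ0.le hLγ X
  have hlower := hsc.add_inner_add_le (hgrad X) a
  rw [← neg_sub X a, inner_neg_right, norm_neg] at hlower
  have hexpand : ‖(X - γ • f' X) - a‖ ^ 2
      = ‖X - a‖ ^ 2 - 2 * γ * ⟪f' X, X - a⟫_ℝ + γ ^ 2 * ‖f' X‖ ^ 2 := by
    rw [sub_right_comm, norm_sub_sq_real, real_inner_smul_right, real_inner_comm, norm_smul,
      Real.norm_of_nonneg hγ0.le]
    ring
  rw [hexpand]
  linear_combination (2 * γ) * hlower + (2 * γ) * hdecrease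

/-- Gradient descent step contraction for a μ-strongly convex function with
L-Lipschitz gradient and step size γ ≤ 1/L:
‖Z − a‖² ≤ (1 − γμ)‖X − a‖² + 2γ(f(a) − f(Z)) where Z = X − γ∇f(X). -/
theorem stmt_12 (d : ℕ) (f : EuclideanSpace ℝ (Fin d) → ℝ) (μ L γ : ℝ)
    (hμ : 0 < μ) (hL : 0 < L)
    (hsc : StrongConvexOn Set.univ μ f)
    (f' : EuclideanSpace ℝ (Fin d) → EuclideanSpace ℝ (Fin d))
    (hgrad : ∀ x, HasGradientAt f (f' x) x)
    (hlip : ∀ x y : EuclideanSpace ℝ (Fin d), ‖f' x - f' y‖ ≤ L * ‖x - y‖)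
    (hγ0 : 0 < γ) (hγ : γ ≤ 1 / L)
    (X a : EuclideanSpace ℝ (Fin d)) :
    ‖(X - γ • f' X) - a‖ ^ 2 ≤
      (1 - γ * μ) * ‖X - a‖ ^ 2 + 2 * γ * (f a - f (X - γ • f' X)) :=
  stmt_12_general d f μ L γ hsc f' hgrad hlip hγ0 hγ X a
end
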